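/- Let V=(Q,D,Δ,w) be a 1-VASS with disequality tests and s ∈ Q. The configuration (s,0) is unbounded if and only if there exists an unbounded configuration in Conf_+ that is reachable from (s,0). -/

import Mathlib

namespace VASSPaper

/-- A 1-VASS with disequality tests: states `Q`, transition relation `delta`,
integer weights `w`, and for each state a cofinite set `D q ⊆ ℕ` of allowed counter values. -/
structure OneVASS (Q : Type) where
  delta : Q → Q → Prop
  w : Q → Q → ℤ
  D : Q → Set ℕ
  cofinite : ∀ q, (D q)ᶜ.Finite

variable {Q : Type}

/-- A path is a nonempty sequence of states joined by transitions. -/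
def IsPath (V : OneVASS Q) : List Q → Prop
  | [] => False
  | [_] => True
  | a :: b :: l => V.delta a b ∧ IsPath V (b :: l)

/-- The weight of a path: the sum of the weights of its transitions. -/
def pathWeight (V : OneVASS Q) (π : List Q) : ℤ :=
  (List.zipWith V.w π π.tail).sum

/-- The counter value at position `i` of the run over `π` starting with counter `z`. -/
def counterAt (V : OneVASS Q) (z : ℕ) (π : List Q) (i : ℕ) : ℤ :=
  (z : ℤ) + pathWeight V (π.take (i + 1))

/-- `π` lifts to a run from counter value `z`: all counter values stay nonnegative. -/
def IsRun (V : OneVASS Q) (π : List Q) (z : ℕ) : Prop :=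
  IsPath V π ∧ ∀ i, i < π.length → 0 ≤ counterAt V z π i

/-- A valid run additionally respects all disequality guards. -/
def IsValidRun (V : OneVASS Q) (π : List Q) (z : ℕ) : Prop :=
  IsRun V π z ∧ ∀ i, ∀ h : i < π.length, (counterAt V z π i).toNat ∈ V.D (π.get ⟨i, h⟩)

/-- `π` goes from configuration `c` to configuration `c'`. -/
def RunFromTo (V : OneVASS Q) (π : List Q) (c c' : Q × ℕ) : Prop :=
  π.head? = some c.1 ∧ π.getLast? = some c'.1 ∧ (c'.2 : ℤ) = (c.2 : ℤ) + pathWeight V π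

/-- `c'` is reachable from `c` by a valid run. -/
def Reaches (V : OneVASS Q) (c c' : Q × ℕ) : Prop :=
  ∃ π, IsValidRun V π c.2 ∧ RunFromTo V π c c'

/-- A configuration is unbounded if infinitely many configurations are reachable from it. -/
def Unbounded (V : OneVASS Q) (c : Q × ℕ) : Prop :=
  {c' | Reaches V c c'}.Infinite

/-- `(s,0)` covers the state `t`. -/
def Covers (V : OneVASS Q) (s t : Q) : Prop :=
  ∃ z, Reaches V (s, 0) (t, z)

/-- Every state has at most one disequality guard. -/
def SingleGuard (V : OneVASS Q) : Prop :=
  ∀ q, V.D q = Set.univ ∨ ∃ g : ℕ, V.D q = {g}ᶜ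

/-- The minimum weight of a (possibly empty) prefix of `π`. -/
def pmin (V : OneVASS Q) (π : List Q) : ℤ :=
  ((List.range (π.length + 1)).map fun i => pathWeight V (π.take i)).foldr min 0

/-- The maximum weight of a (possibly empty) suffix of `π`. -/
def smax (V : OneVASS Q) (π : List Q) : ℤ :=
  ((List.range (π.length + 1)).map fun i => pathWeight V (π.drop i)).foldr max 0

/-- A cycle on `q`: a path with at least one transition starting and ending at `q`. -/
def IsCycleOn (V : OneVASS Q) (π : List Q) (q : Q) : Prop :=
  IsPath V π ∧ 2 ≤ π.length ∧ π.head? = some q ∧ π.getLast? = some q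

/-- A simple cycle on `q`. -/
def IsSimpleCycleOn (V : OneVASS Q) (π : List Q) (q : Q) : Prop :=
  IsCycleOn V π q ∧ π.dropLast.Nodup

/-- The set of states lying on a positive-weight simple cycle. -/
def Qplus (V : OneVASS Q) : Set Q :=
  {q | ∃ π, IsSimpleCycleOn V π q ∧ 0 < pathWeight V π}

/-- `γ` is a valid choice of cycles: for each `q ∈ Q₊`, `γ q` is a simple positive cycle
on `q` whose `pmin` is maximal among all positive-weight simple cycles on `q`. -/
def GammaChoice (V : OneVASS Q) (γ : Q → List Q) : Prop :=
  ∀ q ∈ Qplus V,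
    IsSimpleCycleOn V (γ q) q ∧ 0 < pathWeight V (γ q) ∧
      ∀ π, IsSimpleCycleOn V π q → 0 < pathWeight V π → pmin V π ≤ pmin V (γ q)

/-- `Conf₊`: configurations `(q,z)` with `q ∈ Q₊` and `z + pmin (γ q) ≥ 0`. -/
def ConfPlus (V : OneVASS Q) (γ : Q → List Q) : Set (Q × ℕ) :=
  {c | c.1 ∈ Qplus V ∧ 0 ≤ (c.2 : ℤ) + pmin V (γ c.1)}

/-- `W_q`, the weight of the chosen cycle `γ q`, as a natural number. -/
def Wnat (V : OneVASS Q) (γ : Q → List Q) (q : Q) : ℕ :=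
  (pathWeight V (γ q)).toNat

/-- The `q`-residue class of `r` modulo `W_q`. -/
def resClass (V : OneVASS Q) (γ : Q → List Q) (q : Q) (r : ℕ) : Set (Q × ℕ) :=
  {c | c ∈ ConfPlus V γ ∧ c.1 = q ∧ c.2 % Wnat V γ q = r}

/-- `iterCycle π k` is the cycle `π` iterated `k+1` times. -/
def iterCycle (π : List Q) : ℕ → List Q
  | 0 => π
  | k + 1 => iterCycle π k ++ π.tail

/-- Counter values `z < z'` at state `q` are connected by a valid run iterating `γ q`. -/
def chainLinked (V : OneVASS Q) (γ : Q → List Q) (q : Q) (z z' : ℕ) : Prop :=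
  ∃ k, IsValidRun V (iterCycle (γ q) k) z ∧
    (z' : ℤ) = (z : ℤ) + pathWeight V (iterCycle (γ q) k)

/-- Any two configurations of `S` are connected by iterating `γ q`. -/
def ChainCond (V : OneVASS Q) (γ : Q → List Q) (q : Q) (S : Set (Q × ℕ)) : Prop :=
  ∀ c ∈ S, ∀ c' ∈ S, c.2 < c'.2 → chainLinked V γ q c.2 c'.2

/-- A `q`-chain inside the `q`-residue class of `r`: a maximal subset whose
configurations are pairwise connected by iterating `γ q`. -/
def IsChainIn (V : OneVASS Q) (γ : Q → List Q) (q : Q) (r : ℕ) (C : Set (Q × ℕ)) : Prop :=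
  C ⊆ resClass V γ q r ∧ ChainCond V γ q C ∧
    ∀ C', C ⊆ C' → C' ⊆ resClass V γ q r → ChainCond V γ q C' → C' = C

/-- A chain (in some residue class of some state of `Q₊`). -/
def IsChain (V : OneVASS Q) (γ : Q → List Q) (C : Set (Q × ℕ)) : Prop :=
  ∃ q r, q ∈ Qplus V ∧ r < Wnat V γ q ∧ IsChainIn V γ q r C

/-- A set of configurations is bounded if its counter values are bounded. -/
def chainBounded (C : Set (Q × ℕ)) : Prop :=
  BddAbove (Prod.snd '' C)

/-- A residue class is trivial if it consists of a single unbounded chain. -/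
def TrivialClass (V : OneVASS Q) (γ : Q → List Q) (q : Q) (r : ℕ) : Prop :=
  IsChainIn V γ q r (resClass V γ q r) ∧ ¬ chainBounded (resClass V γ q r)

/-- There is a valid run of length `k` (i.e. `k` transitions) from `c` into the set `S`. -/
def RunLenTo (V : OneVASS Q) (c : Q × ℕ) (S : Set (Q × ℕ)) (k : ℕ) : Prop :=
  ∃ π c', c' ∈ S ∧ IsValidRun V π c.2 ∧ RunFromTo V π c c' ∧ π.length = k + 1

/-- Configurations of `Conf₊ \ Un` whose distance to `Un` is minimal among all
configurations of `Conf₊ \ Un`. -/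
def Uprime (V : OneVASS Q) (γ : Q → List Q) (Un : Set (Q × ℕ)) : Set (Q × ℕ) :=
  {c | c ∈ ConfPlus V γ \ Un ∧
    ∃ k, RunLenTo V c Un k ∧
      ∀ c' ∈ ConfPlus V γ \ Un, ∀ j, RunLenTo V c' Un j → k ≤ j}

/-- `S` is downward closed in every chain. -/
def dcClosed (V : OneVASS Q) (γ : Q → List Q) (S : Set (Q × ℕ)) : Prop :=
  ∀ C, IsChain V γ C → ∀ c ∈ S ∩ C, ∀ c' ∈ C, c'.2 ≤ c.2 → c' ∈ S

/-- The inductive sequence `U_n`: `U_0` is the union of the unbounded chains; `U_{n+1}` is the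
smallest superset of `U_n ∪ U'_n` that is downward closed in every chain. -/
def U (V : OneVASS Q) (γ : Q → List Q) : ℕ → Set (Q × ℕ)
  | 0 => ⋃₀ {C | IsChain V γ C ∧ ¬ chainBounded C}
  | n + 1 => ⋂₀ {S | U V γ n ∪ Uprime V γ (U V γ n) ⊆ S ∧ dcClosed V γ S}

/-- `C` is an `n`-active bounded chain in the `q`-residue class of `r`. -/
def nActiveIn (V : OneVASS Q) (γ : Q → List Q) (q : Q) (r : ℕ) (n : ℕ)
    (C : Set (Q × ℕ)) : Prop :=
  IsChainIn V γ q r C ∧ chainBounded C ∧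
    ∃ c ∈ U V γ n ∩ resClass V γ q r, ∃ c' ∈ C, c.2 ≤ c'.2

/-- `δ_n(C)` for a `q`-chain `C`: configurations outside `U_n` whose counter value lies
between two counter values of `C \ U_n`. -/
def deltaC (V : OneVASS Q) (γ : Q → List Q) (n : ℕ) (q : Q) (C : Set (Q × ℕ)) :
    Set (Q × ℕ) :=
  {c | c ∈ ConfPlus V γ ∧ c.1 = q ∧ c ∉ U V γ n ∧
    ∃ z₁ z₂, (q, z₁) ∈ C \ U V γ n ∧ (q, z₂) ∈ C \ U V γ n ∧ z₁ ≤ c.2 ∧ c.2 ≤ z₂}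

/-- `δ_n(R)` for the `q`-residue class `R` of `r`: union of `δ_n(C)` over `n`-active chains. -/
def deltaR (V : OneVASS Q) (γ : Q → List Q) (n : ℕ) (q : Q) (r : ℕ) : Set (Q × ℕ) :=
  {c | ∃ C, nActiveIn V γ q r n C ∧ c ∈ deltaC V γ n q C}

/-- A positive-weight cycle (as a list of states). -/
def IsPosCycle (V : OneVASS Q) (π : List Q) : Prop :=
  2 ≤ π.length ∧ π.head? = π.getLast? ∧ 0 < pathWeight V π

/-- A path is primitive if no proper infix of it is a positive-weight cycle. -/
def Primitive (V : OneVASS Q) (π : List Q) : Prop :=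
  ∀ i l, (π.drop i).take l ≠ π → ¬ IsPosCycle V ((π.drop i).take l)

/-!
If `(s,0)` is unbounded, runs from it reach arbitrarily high counter values. After its last
visit at or below a threshold `T`, such a run climbs in steps of at most the maximal weight `M`,
and a new running maximum can only be set at a state not visited before since the last low
point; so once the counter exceeds `T + |Q| M`, some state is revisited at a strictly higher
counter value. The infix between the two visits is a positive cycle, and every positive cycle
passes through a state `r ∈ Q₊` (split a non-simple one at a repeated state: one of the two
shorter cycles is positive). The run visits `r` above `T`; with `T` beyond every guard and every
`-pmin γ_q`, that configuration lies in `Conf₊`, and pumping `γ_r` from it never meets a guard.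
The converse is transitivity of reachability.
-/

section Sequences

open Finset

variable {α : Type*} (f : ℕ → α) (v : ℕ → ℤ) {M : ℤ} {N : ℕ}

theorem add_le_add_card_image_mul [DecidableEq α] (hM : 0 ≤ M)
    (hstep : ∀ i < N, v (i + 1) ≤ v i + M)
    (hrep : ∀ i j, i < j → j ≤ N → f i = f j → v j ≤ v i) :
    ∀ i ≤ N, v i + M ≤ v 0 + #((range (N + 1)).image f) * M := by
  induction N with
  | zero => intro i hi; simp [Nat.le_zero.mp hi]
  | succ N ih =>
    have ih := ih (fun i hi => hstep i (by omega)) (fun i j hij hj => hrep i j hij (by omega))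
    have hrange : range (N + 1 + 1) = insert (N + 1) (range (N + 1)) := range_add_one
    have hsub : #((range (N + 1)).image f) ≤ #((range (N + 1 + 1)).image f) :=
      card_le_card (image_subset_image (range_subset_range.mpr (by omega)))
    have hmono : ∀ i ≤ N, v i + M ≤ v 0 + #((range (N + 1 + 1)).image f) * M := fun i hi =>
      (ih i hi).trans (by gcongr)
    intro i hi
    rcases Nat.lt_or_ge i (N + 1) with hi' | hi'
    · exact hmono i (by omega)
    obtain rfl : i = N + 1 := by omega
    -- a new running maximum can only be reached at a value of `f` not taken before
    by_cases hnew : f (N + 1) ∈ (range (N + 1)).image f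
    · obtain ⟨j, hj, hfj⟩ := mem_image.mp hnew
      have := hrep j (N + 1) (by simpa using hj) le_rfl hfj
      linarith [hmono j (by simpa [Nat.lt_succ_iff] using hj)]
    · rw [hrange, image_insert, card_insert_of_notMem hnew]
      push_cast
      linarith [hstep N (by omega), ih N le_rfl]

theorem exists_lt_map_eq_of_card_mul_lt [Fintype α] (hM : 0 ≤ M)
    (hstep : ∀ i < N, v (i + 1) ≤ v i + M) (hN : v 0 + Fintype.card α * M < v N + M) :
    ∃ i j, i < j ∧ j ≤ N ∧ f i = f j ∧ v i < v j := by
  classical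
  by_contra! hrep
  have hcard : (#((range (N + 1)).image f) : ℤ) ≤ Fintype.card α := by
    exact_mod_cast card_le_univ _
  have := add_le_add_card_image_mul f v hM hstep hrep N le_rfl
  nlinarith

theorem exists_lt_map_eq_of_card_mul_lt_above [Fintype α] (hM : 0 ≤ M) (T : ℤ)
    (h0 : v 0 ≤ T) (hstep : ∀ i < N, v (i + 1) ≤ v i + M) (hN : T + Fintype.card α * M < v N) :
    ∃ i j, i < j ∧ j ≤ N ∧ f i = f j ∧ v i < v j ∧ ∀ k, i ≤ k → k ≤ j → T < v k := by
  set p := Nat.findGreatest (fun i => v i ≤ T) N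
  have hpT : v p ≤ T := Nat.findGreatest_spec (P := fun i => v i ≤ T) (Nat.zero_le N) h0
  have habove : ∀ k, p < k → k ≤ N → T < v k := fun k hpk hkN =>
    lt_of_not_ge (Nat.findGreatest_is_greatest hpk hkN)
  have hpN : p < N := by
    refine lt_of_le_of_ne (Nat.findGreatest_le N) fun hp => ?_
    have : 0 ≤ (Fintype.card α : ℤ) * M := by positivity
    rw [hp] at hpT
    linarith
  obtain ⟨i, j, hij, hj, hf, hv⟩ := exists_lt_map_eq_of_card_mul_lt (N := N - (p + 1))
    (fun k => f (p + 1 + k)) (fun k => v (p + 1 + k)) hM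
    (fun i hi => by simpa only [add_assoc] using hstep (p + 1 + i) (by omega))
    (by
      have := hstep p hpN
      rw [show p + 1 + (N - (p + 1)) = N by omega, add_zero]
      linarith)
  exact ⟨p + 1 + i, p + 1 + j, by omega, by omega, hf, hv,
    fun k hik hkj => habove k (by omega) (by omega)⟩

end Sequences

lemma exists_nat_forall_le {ι : Type*} [Finite ι] (f : ι → ℤ) : ∃ n : ℕ, ∀ i, f i ≤ n := by
  obtain ⟨n, hn⟩ := Finite.bddAbove_range fun i => (f i).toNat
  exact ⟨n, fun i => (Int.self_le_toNat _).trans (by exact_mod_cast hn ⟨i, rfl⟩)⟩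

lemma exists_eq_append_cons_append_cons_of_not_nodup {α : Type*} {l : List α}
    (h : ¬ l.Nodup) : ∃ a l₁ l₂ l₃, l = l₁ ++ a :: (l₂ ++ a :: l₃) := by
  obtain ⟨a, ha⟩ : ∃ a, List.Sublist [a, a] l := by simpa [List.nodup_iff_sublist] using h
  obtain ⟨r₁, r₂, rfl, h₁, h₂⟩ := List.cons_sublist_iff.mp ha
  obtain ⟨l₁, l₂, rfl⟩ := List.append_of_mem h₁
  obtain ⟨l₃, l₄, rfl⟩ := List.append_of_mem (List.singleton_sublist.mp h₂)
  exact ⟨a, l₁, l₂ ++ l₃, l₄, by simp⟩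

section Paths

variable {V : OneVASS Q}

@[simp] lemma pathWeight_singleton (a : Q) : pathWeight V [a] = 0 := rfl

@[simp] lemma pathWeight_cons_cons (a b : Q) (l : List Q) :
    pathWeight V (a :: b :: l) = V.w a b + pathWeight V (b :: l) := by
  simp [pathWeight]

lemma pathWeight_append_cons (xs : List Q) (a : Q) (ys : List Q) :
    pathWeight V (xs ++ a :: ys) = pathWeight V (xs ++ [a]) + pathWeight V (a :: ys) := by
  induction xs using List.twoStepInduction with
  | nil => simp
  | singleton x => simp
  | cons_cons x y xs _ ih =>
    have := ih y
    simp only [List.cons_append] at this ⊢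
    simp only [pathWeight_cons_cons, this]
    ring

lemma isPath_iff {π : List Q} : IsPath V π ↔ π ≠ [] ∧ π.IsChain V.delta := by
  induction π using List.twoStepInduction with
  | nil => simp [IsPath]
  | singleton a => simp [IsPath]
  | cons_cons a b l _ ih =>
    rw [IsPath, ih b, List.isChain_cons_cons]
    simp

lemma isPath_append_cons {xs ys : List Q} {a : Q} :
    IsPath V (xs ++ a :: ys) ↔ IsPath V (xs ++ [a]) ∧ IsPath V (a :: ys) := by
  rw [isPath_iff, isPath_iff, isPath_iff, List.isChain_split]
  simp

variable (V) in
lemma pmin_le_pathWeight_take (π : List Q) {i : ℕ} (hi : i ≤ π.length) :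
    pmin V π ≤ pathWeight V (π.take i) :=
  List.min_le_of_le' 0 (List.mem_map_of_mem (List.mem_range.mpr (by omega))) le_rfl

end Paths

section Runs

variable {V : OneVASS Q}

lemma counterAt_zero {π : List Q} (hπ : π ≠ []) (z : ℕ) : counterAt V z π 0 = z := by
  obtain ⟨a, l, rfl⟩ := List.exists_cons_of_ne_nil hπ
  simp [counterAt]

lemma counterAt_length_sub_one (z : ℕ) (π : List Q) :
    counterAt V z π (π.length - 1) = z + pathWeight V π := by
  rw [counterAt, List.take_of_length_le (by omega)]

lemma counterAt_succ (z : ℕ) {π : List Q} {i : ℕ} (h : i + 1 < π.length) :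
    counterAt V z π (i + 1) = counterAt V z π i + V.w π[i] π[i + 1] := by
  have htake : π.take (i + 1 + 1) = π.take i ++ π[i] :: [π[i + 1]] := by
    rw [List.take_succ_eq_append_getElem h, List.take_succ_eq_append_getElem (by omega), List.append_assoc]
    rfl
  rw [counterAt, counterAt, htake, pathWeight_append_cons, ← List.take_succ_eq_append_getElem (by omega)]
  simp only [pathWeight_cons_cons, pathWeight_singleton]
  ring

lemma counterAt_append_of_lt (z : ℕ) {xs : List Q} (ys : List Q) {i : ℕ} (hi : i < xs.length) :
    counterAt V z (xs ++ ys) i = counterAt V z xs i := by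
  rw [counterAt, counterAt, List.take_append_of_le_length hi]

lemma counterAt_append_cons {xs ys : List Q} {a : Q} {z z' : ℕ}
    (hz : (z' : ℤ) = z + pathWeight V (xs ++ [a])) (k : ℕ) :
    counterAt V z (xs ++ a :: ys) (k + xs.length) = counterAt V z' (a :: ys) k := by
  have htake : (xs ++ a :: ys).take (k + xs.length + 1) = xs ++ a :: ys.take k := by
    rw [List.take_append, List.take_of_length_le (by omega),
      show k + xs.length + 1 - xs.length = k + 1 by omega, List.take_succ_cons]
  rw [counterAt, counterAt, htake, pathWeight_append_cons, hz, List.take_succ_cons]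
  ring

lemma isValidRun_iff {π : List Q} {z : ℕ} :
    IsValidRun V π z ↔ IsPath V π ∧ ∀ i (hi : i < π.length),
      0 ≤ counterAt V z π i ∧ (counterAt V z π i).toNat ∈ V.D π[i] := by
  simp only [IsValidRun, IsRun, List.get_eq_getElem]
  exact ⟨fun ⟨⟨hp, h0⟩, hD⟩ => ⟨hp, fun i hi => ⟨h0 i hi, hD i hi⟩⟩,
    fun ⟨hp, h⟩ => ⟨⟨hp, fun i hi => (h i hi).1⟩, fun i hi => (h i hi).2⟩⟩

lemma IsValidRun.append_cons {xs ys : List Q} {a : Q} {z z' : ℕ}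
    (h₁ : IsValidRun V (xs ++ [a]) z) (h₂ : IsValidRun V (a :: ys) z')
    (hz : (z' : ℤ) = z + pathWeight V (xs ++ [a])) : IsValidRun V (xs ++ a :: ys) z := by
  rw [isValidRun_iff] at *
  refine ⟨isPath_append_cons.mpr ⟨h₁.1, h₂.1⟩, fun i hi => ?_⟩
  rcases Nat.lt_or_ge i xs.length with hi' | hi'
  · have h := h₁.2 i (by simp; omega)
    rwa [counterAt_append_of_lt z _ hi', List.getElem_append_left hi',
      ← counterAt_append_of_lt z [a] hi', ← List.getElem_append_left (bs := [a]) hi']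
  · obtain ⟨k, rfl⟩ := Nat.exists_eq_add_of_le' hi'
    rw [counterAt_append_cons hz, ← List.getElem_append_right']
    exact h₂.2 k (by simp at hi ⊢; omega)

lemma Reaches.trans {c₁ c₂ c₃ : Q × ℕ} (h₁ : Reaches V c₁ c₂) (h₂ : Reaches V c₂ c₃) :
    Reaches V c₁ c₃ := by
  obtain ⟨π, hπ, hπhead, hπlast, hπw⟩ := h₁
  obtain ⟨ρ, hρ, hρhead, hρlast, hρw⟩ := h₂
  obtain ⟨xs, rfl⟩ := List.getLast?_eq_some_iff.mp hπlast
  obtain ⟨ys, rfl⟩ := List.head?_eq_some_iff.mp hρhead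
  refine ⟨xs ++ c₂.1 :: ys, hπ.append_cons hρ hπw, ?_, ?_, ?_⟩
  · cases xs <;> simpa using hπhead
  · simpa using hρlast
  · rw [pathWeight_append_cons, hρw, hπw]
    ring

lemma IsValidRun.take {π : List Q} {z : ℕ} (h : IsValidRun V π z) {n : ℕ} (hn : 0 < n) :
    IsValidRun V (π.take n) z := by
  rw [isValidRun_iff] at *
  have hcounter : ∀ i < n, counterAt V z (π.take n) i = counterAt V z π i := fun i hi => by
    rw [counterAt, counterAt, List.take_take, min_eq_left (by omega)]
  refine ⟨isPath_iff.mpr ⟨?_, (isPath_iff.mp h.1).2.take n⟩, fun i hi => ?_⟩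
  · rw [ne_eq, List.take_eq_nil_iff, not_or]
    exact ⟨hn.ne', (isPath_iff.mp h.1).1⟩
  · simp only [List.length_take] at hi
    rw [hcounter i (by omega), List.getElem_take]
    exact h.2 i (by omega)

lemma IsValidRun.reaches_getElem {π : List Q} {z : ℕ} (h : IsValidRun V π z) {s : Q}
    (hs : π.head? = some s) {i : ℕ} (hi : i < π.length) :
    Reaches V (s, z) (π[i], (counterAt V z π i).toNat) := by
  refine ⟨π.take (i + 1), h.take (Nat.succ_pos i), ?_, ?_, ?_⟩
  · obtain ⟨t, rfl⟩ := List.head?_eq_some_iff.mp hs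
    simp
  · rw [List.take_succ_eq_append_getElem hi, List.getLast?_concat]
  · rw [Int.toNat_of_nonneg ((isValidRun_iff.mp h).2 i hi).1, counterAt]

end Runs

lemma OneVASS.exists_forall_lt_mem_D [Finite Q] (V : OneVASS Q) :
    ∃ B : ℕ, ∀ q n, B < n → n ∈ V.D q := by
  obtain ⟨B, hB⟩ := (Set.finite_iUnion V.cofinite).bddAbove
  exact ⟨B, fun q n hn => by_contra fun h => (hB (Set.mem_iUnion.mpr ⟨q, h⟩)).not_gt hn⟩

lemma Unbounded.exists_reaches_lt [Finite Q] {V : OneVASS Q} {c : Q × ℕ} (h : Unbounded V c)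
    (n : ℕ) : ∃ c', Reaches V c c' ∧ n < c'.2 := by
  by_contra! hle
  exact h ((Set.finite_univ.prod (Set.finite_Iic n)).subset fun c' hc' => ⟨trivial, hle c' hc'⟩)

section Pumping

variable {V : OneVASS Q} {B : ℕ}

lemma isValidRun_of_lt_add_pmin (hB : ∀ q n, B < n → n ∈ V.D q) {π : List Q}
    (hp : IsPath V π) {z : ℕ} (hz : B < z + pmin V π) : IsValidRun V π z := by
  refine isValidRun_iff.mpr ⟨hp, fun i hi => ?_⟩
  have hcounter : B < counterAt V z π i := by
    have := pmin_le_pathWeight_take V π (i := i + 1) hi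
    rw [counterAt]
    omega
  exact ⟨by omega, hB _ _ (by omega)⟩

lemma reaches_add_of_isCycleOn (hB : ∀ q n, B < n → n ∈ V.D q) {π : List Q} {q : Q}
    (hc : IsCycleOn V π q) (hw : 0 ≤ pathWeight V π) {z : ℕ} (hz : B < z + pmin V π) :
    Reaches V (q, z) (q, z + (pathWeight V π).toNat) :=
  ⟨π, isValidRun_of_lt_add_pmin hB hc.1 hz, hc.2.2.1, hc.2.2.2, by simp; omega⟩

lemma unbounded_of_isCycleOn (hB : ∀ q n, B < n → n ∈ V.D q) {π : List Q} {q : Q}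
    (hc : IsCycleOn V π q) (hpos : 0 < pathWeight V π) {z : ℕ} (hz : B < z + pmin V π) :
    Unbounded V (q, z) := by
  set W := (pathWeight V π).toNat
  have hreach : ∀ k : ℕ, Reaches V (q, z) (q, z + (k + 1) * W) := by
    intro k
    induction k with
    | zero => simpa using reaches_add_of_isCycleOn hB hc hpos.le hz
    | succ k ih =>
      refine ih.trans ?_
      rw [show z + (k + 1 + 1) * W = z + (k + 1) * W + W by ring]
      refine reaches_add_of_isCycleOn hB hc hpos.le (hz.trans_le ?_)
      gcongr
      exact_mod_cast Nat.le_add_right _ _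
  refine Set.infinite_of_injective_forall_mem (fun a b hab => ?_) hreach
  have hW : 0 < W := by omega
  simp only [Prod.mk.injEq, true_and, add_right_inj] at hab
  have := Nat.eq_of_mul_eq_mul_right hW hab
  omega

lemma mem_confPlus_and_unbounded (hB : ∀ q n, B < n → n ∈ V.D q) {γ : Q → List Q}
    (hγ : GammaChoice V γ) {P : ℕ} (hP : ∀ q, -pmin V (γ q) ≤ P) {r : Q} (hr : r ∈ Qplus V)
    {z : ℕ} (hz : B + P < z) :
    (r, z) ∈ ConfPlus V γ ∧ Unbounded V (r, z) := by
  obtain ⟨hcycle, hpos, -⟩ := hγ r hr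
  have := hP r
  exact ⟨⟨hr, by push_cast; omega⟩, unbounded_of_isCycleOn hB hcycle.1 hpos (by omega)⟩

end Pumping

section Cycles

variable {V : OneVASS Q}

lemma IsPosCycle.exists_mem_qplus {σ : List Q} (hp : IsPath V σ) (hσ : IsPosCycle V σ) :
    ∃ r ∈ σ, r ∈ Qplus V := by
  induction hn : σ.length using Nat.strong_induction_on generalizing σ with
  | _ n ih =>
  obtain ⟨h2, hends, hpos⟩ := hσ
  by_cases hnd : σ.dropLast.Nodup
  · obtain ⟨a, t, rfl⟩ := List.exists_cons_of_ne_nil (isPath_iff.mp hp).1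
    exact ⟨a, List.mem_cons_self, a :: t, ⟨⟨hp, h2, rfl, hends.symm⟩, hnd⟩, hpos⟩
  obtain ⟨b, hb⟩ := Option.ne_none_iff_exists'.mp
    (List.getLast?_eq_none_iff.not.mpr (isPath_iff.mp hp).1)
  obtain ⟨xs, rfl⟩ := List.getLast?_eq_some_iff.mp hb
  rw [List.dropLast_concat] at hnd
  obtain ⟨a, l₁, l₂, l₃, rfl⟩ := exists_eq_append_cons_append_cons_of_not_nodup hnd
  simp only [List.append_assoc, List.cons_append] at *
  have hlen : n = l₁.length + l₂.length + l₃.length + 3 := by simp at hn; omega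
  have hmem : ∀ r, r ∈ a :: (l₂ ++ [a]) ∨ r ∈ l₁ ++ a :: (l₃ ++ [b]) →
      r ∈ l₁ ++ a :: (l₂ ++ a :: (l₃ ++ [b])) := by
    simp only [List.mem_append, List.mem_cons]
    tauto
  have hp₁ := isPath_append_cons.mp hp
  have hp₂ := (isPath_append_cons (xs := a :: l₂)).mp (by simpa using hp₁.2)
  have e₁ := pathWeight_append_cons (V := V) l₁ a (l₂ ++ a :: (l₃ ++ [b]))
  have e₂ := pathWeight_append_cons (V := V) (a :: l₂) a (l₃ ++ [b])
  have e₃ := pathWeight_append_cons (V := V) l₁ a (l₃ ++ [b])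
  simp only [List.cons_append] at e₂ hp₂
  -- the cycle splits at the repeated state `a` into two shorter cycles, one of them positive
  rcases lt_or_ge 0 (pathWeight V (a :: (l₂ ++ [a]))) with hinner | hinner
  · have hlast : (a :: (l₂ ++ [a])).getLast? = some a :=
      List.getLast?_eq_some_iff.mpr ⟨a :: l₂, rfl⟩
    obtain ⟨r, hr, hrQ⟩ := ih _ (by simp; omega) hp₂.1 ⟨by simp, hlast.symm, hinner⟩ rfl
    exact ⟨r, hmem r (.inl hr), hrQ⟩
  · have hhead :
        (l₁ ++ a :: (l₃ ++ [b])).head? = (l₁ ++ a :: (l₂ ++ a :: (l₃ ++ [b]))).head? := by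
      cases l₁ <;> simp
    have hlast : (l₁ ++ a :: (l₃ ++ [b])).getLast? = some b :=
      List.getLast?_eq_some_iff.mpr ⟨l₁ ++ a :: l₃, by simp⟩
    obtain ⟨r, hr, hrQ⟩ := ih _ (by simp; omega) (isPath_append_cons.mpr ⟨hp₁.1, hp₂.2⟩)
      ⟨by simp; omega, by rw [hhead, hends, hb, hlast], by omega⟩ rfl
    exact ⟨r, hmem r (.inr hr), hrQ⟩

end Cycles

section Segments

variable {V : OneVASS Q}

lemma exists_mem_qplus_of_counterAt_lt {π : List Q} (hπ : IsPath V π) (z : ℕ) {i j : ℕ}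
    (hij : i < j) (hj : j < π.length) (heq : π[i] = π[j])
    (hlt : counterAt V z π i < counterAt V z π j) :
    ∃ k, ∃ hk : k < π.length, i ≤ k ∧ k ≤ j ∧ π[k] ∈ Qplus V := by
  set σ := (π.take (j + 1)).drop i with hσ
  have hlen : σ.length = j + 1 - i := by simp [σ]; omega
  have hget : ∀ m (hm : m < σ.length), σ[m] = π[i + m] := fun m hm => by simp [σ]
  have hcons : σ = π[i] :: (π.take (j + 1)).drop (i + 1) := by
    rw [hσ, List.drop_eq_getElem_cons (by simp; omega), List.getElem_take]
  have hweight : pathWeight V σ = counterAt V z π j - counterAt V z π i := by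
    have htake : π.take (j + 1) = π.take i ++ σ := by
      conv_lhs => rw [← List.take_append_drop i (π.take (j + 1))]
      rw [List.take_take, min_eq_left (by omega)]
    rw [counterAt, counterAt, htake, hcons, pathWeight_append_cons, ← hcons,
      List.take_succ_eq_append_getElem (by omega)]
    ring
  have hpath : IsPath V σ := isPath_iff.mpr
    ⟨by simp [← List.length_pos_iff, hlen]; omega, ((isPath_iff.mp hπ).2.take _).drop _⟩
  have hcycle : IsPosCycle V σ := by
    refine ⟨by omega, ?_, by omega⟩
    rw [List.head?_eq_getElem?, List.getLast?_eq_getElem?, List.getElem?_eq_getElem (by omega),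
      List.getElem?_eq_getElem (by omega), hget, hget]
    simp only [hlen, add_zero, heq, show i + (j + 1 - i - 1) = j by omega]
  obtain ⟨r, hr, hrQ⟩ := hcycle.exists_mem_qplus hpath
  obtain ⟨m, hm, rfl⟩ := List.mem_iff_getElem.mp hr
  exact ⟨i + m, by omega, by omega, by omega, hget m hm ▸ hrQ⟩

end Segments

/-- `(s,0)` is unbounded iff it can reach an unbounded configuration of `Conf₊`. -/
theorem unbounded_iff_reach_unbounded_confPlus
    {Q : Type} [Fintype Q] (V : OneVASS Q) (γ : Q → List Q) (hγ : GammaChoice V γ)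
    (s : Q) :
    Unbounded V (s, 0) ↔
      ∃ c ∈ ConfPlus V γ, Unbounded V c ∧ Reaches V (s, 0) c := by
  refine ⟨fun hU => ?_, fun ⟨c, _, hc, hsc⟩ => hc.mono fun _ => hsc.trans⟩
  obtain ⟨B, hB⟩ := V.exists_forall_lt_mem_D
  obtain ⟨M, hM⟩ := exists_nat_forall_le fun e : Q × Q => V.w e.1 e.2
  obtain ⟨P, hP⟩ := exists_nat_forall_le fun q => -pmin V (γ q)
  obtain ⟨⟨_, z⟩, ⟨π, hπ, hhead, -, hz⟩, hzlarge⟩ :=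
    hU.exists_reaches_lt (B + P + Fintype.card Q * M)
  have hne := (isPath_iff.mp hπ.1.1).1
  obtain ⟨i, j, hij, hj, hstate, hcounter, habove⟩ :=
    exists_lt_map_eq_of_card_mul_lt_above (fun k => π.getD k s) (counterAt V 0 π)
      (N := π.length - 1) (Nat.cast_nonneg M) (B + P)
      (by rw [counterAt_zero hne]; positivity)
      (fun k hk => by rw [counterAt_succ 0 (by omega)]; linarith [hM (π[k], π[k + 1])])
      (by rw [counterAt_length_sub_one]; push_cast at hz hzlarge; omega)
  rw [List.getD_eq_getElem π s (n := i) (by omega),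
    List.getD_eq_getElem π s (n := j) (by omega)] at hstate
  obtain ⟨k, hk, hik, hkj, hkQ⟩ :=
    exists_mem_qplus_of_counterAt_lt hπ.1.1 0 hij (by omega) hstate hcounter
  have hlarge := habove k hik hkj
  obtain ⟨hconf, hunb⟩ := mem_confPlus_and_unbounded hB hγ hP hkQ
    (z := (counterAt V 0 π k).toNat) (by omega)
  exact ⟨_, hconf, hunb, hπ.reaches_getElem hhead hk⟩

end VASSPaper
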